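/- Exhaustiveness is incompatible with priceability: in the approval-based election with N = {1,2,3}, C = {c_1, c_2, c_3}, approval sets A(1) = A(2) = {c_1} and A(3) = {c_2, c_3}, and costs cost(c_1) = 1 and cost(c_2) = cost(c_3) = 1/3, no feasible outcome is both exhaustive and priceable (the only exhaustive feasible outcomes are {c_1} and {c_2, c_3}, and neither is priceable). -/

import Mathlib

/-!
Under a price system `(b, p)` every candidate of `W` is paid for by its approvers, each of
whom has at most `b / 3`, while by (C5) the approvers of a rejected candidate `c` have at most
`cost c` left over.  For `W = {c₁}` this gives `1 ≤ 2b/3` (voters 1, 2 fund `c₁`) and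
`b/3 ≤ 1/3` (voter 3 spends nothing, yet `c₂` is rejected); for `W = {c₂, c₃}` it gives
`2/3 ≤ b/3` (voter 3 funds both) and `2b/3 ≤ 1` (voters 1, 2 spend nothing, yet `c₁` is
rejected).  The feasible exhaustive outcomes are found by enumerating the eight subsets.
-/

open Finset

section PBDefs

variable {V C : Type*} [Fintype V] [DecidableEq V] [Fintype C] [DecidableEq C]

/-- Total cost (as a real number) of a set of candidates. -/
def costOf (cost : C → ℚ) (T : Finset C) : ℝ := ∑ c ∈ T, (cost c : ℝ)

/-- Total (additive) utility of voter `i` for a set of candidates. -/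
def util (u : V → C → ℝ) (i : V) (T : Finset C) : ℝ := ∑ c ∈ T, u i c

/-- A set of candidates is feasible if its total cost is within the budget of 1. -/
def feasible (cost : C → ℚ) (W : Finset C) : Prop := costOf cost W ≤ 1

/-- The validity conditions of a PB election: positive costs, utilities in `[0,1]`,
and every candidate is assigned positive utility by some voter. -/
def validPB (cost : C → ℚ) (u : V → C → ℝ) : Prop :=
  (∀ c, 0 < cost c) ∧ (∀ i c, 0 ≤ u i c ∧ u i c ≤ 1) ∧ (∀ c, ∃ i, 0 < u i c)

/-- Extended justified representation, up to one project: for every (α,T)-cohesive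
(nonempty) group `S` of voters, some voter `i ∈ S` gets utility at least `∑ c ∈ T, α c`,
or some voter `i ∈ S` would exceed this utility after adding one more candidate. -/
def EJRupToOne (cost : C → ℚ) (u : V → C → ℝ) (W : Finset C) : Prop :=
  ∀ (α : C → ℝ) (S : Finset V) (T : Finset C),
    (∀ c, 0 ≤ α c ∧ α c ≤ 1) →
    S.Nonempty →
    costOf cost T * (Fintype.card V : ℝ) ≤ (S.card : ℝ) →
    (∀ i ∈ S, ∀ c ∈ T, α c ≤ u i c) →
    (∃ i ∈ S, (∑ c ∈ T, α c) ≤ util u i W) ∨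
      (∃ i ∈ S, ∃ a : C, (∑ c ∈ T, α c) < util u i (insert a W))

/-- Extended justified representation (exact version): for every (α,T)-cohesive
(nonempty) group `S` of voters, some voter `i ∈ S` gets utility at least `∑ c ∈ T, α c`. -/
def EJRexact (cost : C → ℚ) (u : V → C → ℝ) (W : Finset C) : Prop :=
  ∀ (α : C → ℝ) (S : Finset V) (T : Finset C),
    (∀ c, 0 ≤ α c ∧ α c ≤ 1) →
    S.Nonempty →
    costOf cost T * (Fintype.card V : ℝ) ≤ (S.card : ℝ) →
    (∀ i ∈ S, ∀ c ∈ T, α c ≤ u i c) →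
    ∃ i ∈ S, (∑ c ∈ T, α c) ≤ util u i W

/-- A (nonempty) group `S` of voters is weakly (β,T)-cohesive. -/
def weaklyCohesive (cost : C → ℚ) (u : V → C → ℝ) (β : ℝ) (S : Finset V) (T : Finset C) :
    Prop :=
  S.Nonempty ∧ costOf cost T * (Fintype.card V : ℝ) ≤ (S.card : ℝ) ∧
    ∀ i ∈ S, β ≤ util u i T

/-- Full justified representation. -/
def FJR (cost : C → ℚ) (u : V → C → ℝ) (W : Finset C) : Prop :=
  ∀ (β : ℝ) (S : Finset V) (T : Finset C),
    weaklyCohesive cost u β S T → ∃ i ∈ S, β ≤ util u i W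

/-- An outcome is exhaustive if no further candidate fits within the budget. -/
def exhaustive (cost : C → ℚ) (W : Finset C) : Prop :=
  ∀ c ∉ W, 1 < costOf cost (insert c W)

/-- The core: no nonempty group `S` of voters together with a set `T` of candidates
affordable with `S`'s share of the budget can block the outcome. -/
def inCore (cost : C → ℚ) (u : V → C → ℝ) (W : Finset C) : Prop :=
  ∀ (S : Finset V) (T : Finset C), S.Nonempty →
    costOf cost T * (Fintype.card V : ℝ) ≤ (S.card : ℝ) →
    ∃ i ∈ S, util u i T ≤ util u i W

/-- The multiplicative `a`-approximate core. -/
def inAlphaCore (cost : C → ℚ) (u : V → C → ℝ) (a : ℝ) (W : Finset C) : Prop :=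
  ∀ (S : Finset V) (T : Finset C), T.Nonempty →
    costOf cost T ≤ (S.card : ℝ) / (Fintype.card V : ℝ) →
    ∃ i ∈ S, ∃ c ∈ T, util u i T / a ≤ util u i (insert c W)

/-- The total amount paid so far by voter `i`, given per-candidate payments. -/
def totalPaid (pay : V → C → ℝ) (i : V) : ℝ := ∑ c, pay i c

/-- A candidate `c` is ρ-affordable given the payments made so far. -/
def affordable (cost : C → ℚ) (u : V → C → ℝ) (pay : V → C → ℝ) (ρ : ℝ) (c : C) : Prop :=
  ∑ i, min (1 / (Fintype.card V : ℝ) - totalPaid pay i) (u i c * ρ) = (cost c : ℝ)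

/-- One step of Rule X: add a candidate that is ρ-affordable for the minimum ρ ≥ 0,
and record the corresponding payments. -/
def RuleXStep (cost : C → ℚ) (u : V → C → ℝ) :
    (Finset C × (V → C → ℝ)) → (Finset C × (V → C → ℝ)) → Prop := fun s t =>
  ∃ c ∉ s.1, ∃ ρ : ℝ, 0 ≤ ρ ∧ affordable cost u s.2 ρ c ∧
    (∀ ρ' : ℝ, 0 ≤ ρ' → ∀ c' ∉ s.1, affordable cost u s.2 ρ' c' → ρ ≤ ρ') ∧
    t = (insert c s.1,
      fun i c' => if c' = c then
        min (1 / (Fintype.card V : ℝ) - totalPaid s.2 i) (u i c * ρ) else s.2 i c')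

/-- Rule X terminates when no remaining candidate is ρ-affordable for any ρ ≥ 0. -/
def RuleXTerminal (cost : C → ℚ) (u : V → C → ℝ) (s : Finset C × (V → C → ℝ)) : Prop :=
  ∀ ρ : ℝ, 0 ≤ ρ → ∀ c ∉ s.1, ¬ affordable cost u s.2 ρ c

/-- `W` is the output of some execution of Rule X. -/
def RuleXOutcome (cost : C → ℚ) (u : V → C → ℝ) (W : Finset C) : Prop :=
  ∃ pay : V → C → ℝ,
    Relation.ReflTransGen (RuleXStep cost u) (∅, fun _ _ => 0) (W, pay) ∧
      RuleXTerminal cost u (W, pay)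

/-- One step of the Greedy Cohesive Rule: a state consists of the current outcome,
the active voters and the active candidates.  The rule picks a weakly (β,T)-cohesive
group of active voters with β maximal, breaking ties in favor of smaller `cost T`. -/
def GCRStep (cost : C → ℚ) (u : V → C → ℝ) :
    (Finset C × Finset V × Finset C) → (Finset C × Finset V × Finset C) → Prop := fun s t =>
  ∃ (β : ℝ) (S : Finset V) (T : Finset C),
    0 < β ∧ S ⊆ s.2.1 ∧ T ⊆ s.2.2 ∧ weaklyCohesive cost u β S T ∧
    (∀ (β' : ℝ) (S' : Finset V) (T' : Finset C), 0 < β' → S' ⊆ s.2.1 → T' ⊆ s.2.2 →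
      weaklyCohesive cost u β' S' T' → β' ≤ β) ∧
    (∀ (S' : Finset V) (T' : Finset C), S' ⊆ s.2.1 → T' ⊆ s.2.2 →
      weaklyCohesive cost u β S' T' → costOf cost T ≤ costOf cost T') ∧
    t = (s.1 ∪ T, s.2.1 \ S, s.2.2 \ T)

/-- GCR terminates when no weakly cohesive group of active voters remains. -/
def GCRTerminal (cost : C → ℚ) (u : V → C → ℝ) (s : Finset C × Finset V × Finset C) : Prop :=
  ∀ (β : ℝ) (S : Finset V) (T : Finset C), 0 < β → S ⊆ s.2.1 → T ⊆ s.2.2 →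
    ¬ weaklyCohesive cost u β S T

/-- `W` is the output of some execution of the Greedy Cohesive Rule. -/
def GCROutcome (cost : C → ℚ) (u : V → C → ℝ) (W : Finset C) : Prop :=
  ∃ (AV : Finset V) (AC : Finset C),
    Relation.ReflTransGen (GCRStep cost u) (∅, Finset.univ, Finset.univ) (W, AV, AC) ∧
      GCRTerminal cost u (W, AV, AC)

/-- A price system `(b, p)` (with nonnegative payments) supports the outcome `W`:
conditions (C1)-(C5). -/
def supports (cost : C → ℚ) (u : V → C → ℝ) (b : ℝ) (p : V → C → ℝ) (W : Finset C) : Prop :=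
  1 ≤ b ∧ (∀ i c, 0 ≤ p i c) ∧
  (∀ i c, u i c = 0 → p i c = 0) ∧
  (∀ i, ∑ c, p i c ≤ b / (Fintype.card V : ℝ)) ∧
  (∀ c ∈ W, ∑ i, p i c = (cost c : ℝ)) ∧
  (∀ c ∉ W, ∑ i, p i c = 0) ∧
  (∀ c ∉ W, ∑ i ∈ Finset.univ.filter (fun i => 0 < u i c),
    (b / (Fintype.card V : ℝ) - ∑ c' ∈ W, p i c') ≤ (cost c : ℝ))

/-- An outcome is priceable if some price system supports it. -/
def priceable (cost : C → ℚ) (u : V → C → ℝ) (W : Finset C) : Prop :=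
  ∃ (b : ℝ) (p : V → C → ℝ), supports cost u b p W

/-- EJR for approval-based elections: every `T`-cohesive group contains a voter
with at least `|T|` approved candidates in `W`. -/
def approvalEJR (cost : C → ℚ) (A : V → Finset C) (W : Finset C) : Prop :=
  ∀ (S : Finset V) (T : Finset C), S.Nonempty →
    costOf cost T * (Fintype.card V : ℝ) ≤ (S.card : ℝ) →
    (∀ i ∈ S, T ⊆ A i) →
    ∃ i ∈ S, T.card ≤ (A i ∩ W).card

/-- The `t`-th harmonic number. -/
noncomputable def harm (t : ℕ) : ℝ := ∑ j ∈ Finset.range t, (1 : ℝ) / (j + 1)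

/-- The PAV score of an outcome. -/
noncomputable def PAVscore (A : V → Finset C) (W : Finset C) : ℝ := ∑ i, harm ((A i ∩ W).card)

end PBDefs

/-- Costs for the incompatibility example: candidate 0 costs 1,
candidates 1 and 2 cost 1/3 each. -/
def exCost : Fin 3 → ℚ := fun c => if c = 0 then 1 else 1/3

/-- Approval sets: voters 0 and 1 approve {c₁} = {0}; voter 2 approves {c₂,c₃} = {1,2}. -/
def exApprovals : Fin 3 → Finset (Fin 3) := fun i => if i = 2 then {1, 2} else {0}

/-- The corresponding 0/1 utility functions. -/
noncomputable def exUtil : Fin 3 → Fin 3 → ℝ := fun i c => if c ∈ exApprovals i then 1 else 0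

section Cost

variable {C : Type*} {cost : C → ℚ} {W : Finset C}

theorem costOf_eq_cast_sum (cost : C → ℚ) (T : Finset C) :
    costOf cost T = ((∑ c ∈ T, cost c : ℚ) : ℝ) := by
  simp [costOf]

theorem feasible_iff_sum_le_one : feasible cost W ↔ ∑ c ∈ W, cost c ≤ 1 := by
  rw [feasible, costOf_eq_cast_sum]
  exact_mod_cast Iff.rfl

theorem exhaustive_iff_one_lt_sum [DecidableEq C] :
    exhaustive cost W ↔ ∀ c ∉ W, 1 < ∑ c' ∈ insert c W, cost c' := by
  simp only [exhaustive, costOf_eq_cast_sum]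
  exact_mod_cast Iff.rfl

end Cost

section PriceSystem

variable {V C : Type*} [Fintype V] [Fintype C]
  {cost : C → ℚ} {u : V → C → ℝ} {b : ℝ} {p : V → C → ℝ} {W : Finset C}

theorem supports.costOf_le_card_mul (h : supports cost u b p W) {T : Finset C} (hT : T ⊆ W)
    {S : Finset V} (hS : ∀ i ∉ S, ∀ c ∈ T, u i c = 0) :
    costOf cost T ≤ #S * (b / Fintype.card V) := by
  obtain ⟨-, hnonneg, hC1, hC2, hC3, -, -⟩ := h
  calc costOf cost T = ∑ c ∈ T, ∑ i, p i c :=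
        (Finset.sum_congr rfl fun c hc => (hC3 c (hT hc)).symm)
    _ = ∑ i ∈ S, ∑ c ∈ T, p i c := by
        rw [Finset.sum_comm]
        refine (Finset.sum_subset (Finset.subset_univ S) fun i _ hi => ?_).symm
        exact Finset.sum_eq_zero fun c hc => hC1 i c (hS i hi c hc)
    _ ≤ ∑ i ∈ S, ∑ c, p i c := Finset.sum_le_sum fun i _ =>
        Finset.sum_le_sum_of_subset_of_nonneg (Finset.subset_univ T) fun c _ _ => hnonneg i c
    _ ≤ ∑ _i ∈ S, b / Fintype.card V := Finset.sum_le_sum fun i _ => hC2 i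
    _ = #S * (b / Fintype.card V) := by rw [Finset.sum_const, nsmul_eq_mul]

/-- Voters of `S` spend nothing on `W`, so (C5) for `c` counts their whole budgets. -/
theorem supports.card_mul_le_cost (h : supports cost u b p W) {c : C} (hc : c ∉ W)
    {S : Finset V} (hSc : ∀ i ∈ S, 0 < u i c) (hSW : ∀ i ∈ S, ∀ c' ∈ W, u i c' = 0) :
    #S * (b / Fintype.card V) ≤ cost c := by
  obtain ⟨-, hnonneg, hC1, hC2, -, -, hC5⟩ := h
  have hleftover_nonneg : ∀ i, 0 ≤ b / Fintype.card V - ∑ c' ∈ W, p i c' := fun i =>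
    sub_nonneg.2 <| (Finset.sum_le_sum_of_subset_of_nonneg (Finset.subset_univ W)
      fun c' _ _ => hnonneg i c').trans (hC2 i)
  calc (#S : ℝ) * (b / Fintype.card V)
      = ∑ i ∈ S, (b / Fintype.card V - ∑ c' ∈ W, p i c') := by
        rw [Finset.sum_congr rfl fun i hi => by
          rw [Finset.sum_eq_zero fun c' hc' => hC1 i c' (hSW i hi c' hc'), sub_zero],
          Finset.sum_const, nsmul_eq_mul]
    _ ≤ ∑ i ∈ Finset.univ.filter (fun i => 0 < u i c),
          (b / Fintype.card V - ∑ c' ∈ W, p i c') :=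
        Finset.sum_le_sum_of_subset_of_nonneg
          (fun i hi => Finset.mem_filter.2 ⟨Finset.mem_univ i, hSc i hi⟩)
          fun i _ _ => hleftover_nonneg i
    _ ≤ cost c := hC5 c hc

end PriceSystem

theorem exUtil_pos_iff {i c : Fin 3} : 0 < exUtil i c ↔ c ∈ exApprovals i := by
  unfold exUtil; split_ifs with h <;> simp [h]

theorem exUtil_eq_zero_iff {i c : Fin 3} : exUtil i c = 0 ↔ c ∉ exApprovals i := by
  unfold exUtil; split_ifs with h <;> simp [h]

theorem feasible_exhaustive_exCost_iff (W : Finset (Fin 3)) :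
    (feasible exCost W ∧ exhaustive exCost W) ↔ (W = {0} ∨ W = {1, 2}) := by
  rw [feasible_iff_sum_le_one, exhaustive_iff_one_lt_sum]
  revert W
  decide +kernel

/-- Exhaustiveness is incompatible with priceability: in this election
the only feasible exhaustive outcomes are {0} and {1,2}, and no feasible outcome is
both exhaustive and priceable. -/
theorem exhaustive_incompatible_priceable :
    (∀ W : Finset (Fin 3),
      (feasible exCost W ∧ exhaustive exCost W) ↔ (W = {0} ∨ W = {1, 2})) ∧
    (∀ W : Finset (Fin 3), feasible exCost W → exhaustive exCost W →
      ¬ priceable exCost exUtil W) := by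
  refine ⟨feasible_exhaustive_exCost_iff, fun W hf he ⟨b, p, h⟩ => ?_⟩
  rcases (feasible_exhaustive_exCost_iff W).1 ⟨hf, he⟩ with rfl | rfl
  · have hfunded : (1 : ℝ) ≤ 2 * (b / 3) := by
      simpa [costOf, exCost] using h.costOf_le_card_mul subset_rfl (S := {0, 1})
        (by simp only [exUtil_eq_zero_iff]; decide)
    have hunspent : 1 * (b / 3) ≤ (1 / 3 : ℝ) := by
      simpa [exCost] using h.card_mul_le_cost (c := 1) (by decide) (S := {2})
        (by simp only [exUtil_pos_iff]; decide) (by simp only [exUtil_eq_zero_iff]; decide)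
    linarith
  · have hfunded : (1 / 3 + 1 / 3 : ℝ) ≤ 1 * (b / 3) := by
      simpa [costOf, exCost] using h.costOf_le_card_mul subset_rfl (S := {2})
        (by simp only [exUtil_eq_zero_iff]; decide)
    have hunspent : 2 * (b / 3) ≤ (1 : ℝ) := by
      simpa [exCost] using h.card_mul_le_cost (c := 0) (by decide) (S := {0, 1})
        (by simp only [exUtil_pos_iff]; decide) (by simp only [exUtil_eq_zero_iff]; decide)
    linarith
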